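/- arXiv:2507.18152 — 3 statements merged into one kernel-verified Lean document; each statement's English description precedes it below -/
import Mathlib

section
/- For α, v, w > 0, the limit lim_{M→∞} [ ∑_{m=0}^{M} ∑_{n=0}^{M} 1/(α+mv+nw)² − (1/(vw))·log( (α+vM)(α+wM) / (α(α+vM+wM)) ) ] exists (is a finite real number). -/
open Filter Topology Finset

/-- 1D tail bound: `∑_{n<M} 1/(c+nu)² ≤ 1/c² + 1/(cu)`. -/
private lemma oneD_bound (c u : ℝ) (hc : 0 < c) (hu : 0 < u) (M : ℕ) :
    ∑ n ∈ Finset.range M, 1 / (c + (n : ℝ) * u) ^ 2 ≤ 1 / c ^ 2 + 1 / (c * u) := by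
  cases M with
  | zero => simp; positivity
  | succ K =>
    rw [Finset.sum_range_succ']
    have h0 : 1 / (c + ((0 : ℕ) : ℝ) * u) ^ 2 = 1 / c ^ 2 := by norm_num
    rw [h0]
    have key : ∑ n ∈ Finset.range K, 1 / (c + ((n + 1 : ℕ) : ℝ) * u) ^ 2
        ≤ ∑ n ∈ Finset.range K,
          ((fun n : ℕ => (1 / u) * (1 / (c + (n : ℝ) * u))) n
            - (fun n : ℕ => (1 / u) * (1 / (c + (n : ℝ) * u))) (n + 1)) := by
      apply Finset.sum_le_sum
      intro n _
      have hA : (0 : ℝ) < c + (n : ℝ) * u := by positivity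
      have hB : (0 : ℝ) < c + ((n + 1 : ℕ) : ℝ) * u := by positivity
      have h1 : (1 : ℝ) / (c + ((n + 1 : ℕ) : ℝ) * u) ^ 2
          ≤ 1 / ((c + (n : ℝ) * u) * (c + ((n + 1 : ℕ) : ℝ) * u)) := by
        apply one_div_le_one_div_of_le (by positivity)
        push_cast
        nlinarith
      have h2 : 1 / ((c + (n : ℝ) * u) * (c + ((n + 1 : ℕ) : ℝ) * u))
          = (1 / u) * (1 / (c + (n : ℝ) * u)) - (1 / u) * (1 / (c + ((n + 1 : ℕ) : ℝ) * u)) := by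
        push_cast
        field_simp
        ring
      simp only
      push_cast at h1 h2 ⊢
      linarith
    have tel : ∑ n ∈ Finset.range K,
          ((fun n : ℕ => (1 / u) * (1 / (c + (n : ℝ) * u))) n
            - (fun n : ℕ => (1 / u) * (1 / (c + (n : ℝ) * u))) (n + 1))
        = (1 / u) * (1 / (c + ((0 : ℕ) : ℝ) * u)) - (1 / u) * (1 / (c + ((K : ℕ) : ℝ) * u)) :=
      Finset.sum_range_sub' (fun n : ℕ => (1 / u) * (1 / (c + (n : ℝ) * u))) K
    have hKpos : (0 : ℝ) < c + (K : ℝ) * u := by positivity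
    have h3 : (1 / u) * (1 / (c + ((0 : ℕ) : ℝ) * u)) = 1 / (c * u) := by
      rw [Nat.cast_zero, zero_mul, add_zero, one_div_mul_one_div, mul_comm u c]
    have h4 : 0 ≤ (1 / u) * (1 / (c + ((K : ℕ) : ℝ) * u)) := by positivity
    have := key.trans tel.le
    rw [h3] at this
    linarith

/-- The key cell bounds: `1/(A+v+w)² ≤ (1/vw)(log(A+v)+log(A+w)-log A-log(A+v+w)) ≤ 1/A²`. -/
private lemma cell_bounds (v w A : ℝ) (hv : 0 < v) (hw : 0 < w) (hA : 0 < A) :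
    1 / (A + v + w) ^ 2
      ≤ 1 / (v * w) * (Real.log (A + v) + Real.log (A + w) - Real.log A - Real.log (A + v + w))
    ∧ 1 / (v * w) * (Real.log (A + v) + Real.log (A + w) - Real.log A - Real.log (A + v + w))
      ≤ 1 / A ^ 2 := by
  have hAv : 0 < A + v := by linarith
  have hAw : 0 < A + w := by linarith
  have hAvw : 0 < A + v + w := by linarith
  have hP : 0 < A * (A + v + w) := by positivity
  have hPvw : 0 < A * (A + v + w) + v * w := by positivity
  have e1 : Real.log (A * (A + v + w) + v * w) = Real.log (A + v) + Real.log (A + w) := by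
    rw [show A * (A + v + w) + v * w = (A + v) * (A + w) from by ring,
      Real.log_mul hAv.ne' hAw.ne']
  have e2 : Real.log (A * (A + v + w)) = Real.log A + Real.log (A + v + w) :=
    Real.log_mul hA.ne' hAvw.ne'
  have hlog : Real.log (A + v) + Real.log (A + w) - Real.log A - Real.log (A + v + w)
      = Real.log (A * (A + v + w) + v * w) - Real.log (A * (A + v + w)) := by
    rw [e1, e2]; ring
  have hup : Real.log (A * (A + v + w) + v * w) - Real.log (A * (A + v + w))
      ≤ v * w / (A * (A + v + w)) := by
    have h := Real.log_le_sub_one_of_pos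
      (show 0 < (A * (A + v + w) + v * w) / (A * (A + v + w)) from by positivity)
    rw [Real.log_div hPvw.ne' hP.ne'] at h
    have h' : (A * (A + v + w) + v * w) / (A * (A + v + w)) - 1 = v * w / (A * (A + v + w)) := by
      field_simp
      ring
    linarith
  have hlo : v * w / (A * (A + v + w) + v * w)
      ≤ Real.log (A * (A + v + w) + v * w) - Real.log (A * (A + v + w)) := by
    have h := Real.log_le_sub_one_of_pos
      (show 0 < (A * (A + v + w)) / (A * (A + v + w) + v * w) from by positivity)
    rw [Real.log_div hP.ne' hPvw.ne'] at h
    have h' : (A * (A + v + w)) / (A * (A + v + w) + v * w) - 1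
        = -(v * w / (A * (A + v + w) + v * w)) := by
      field_simp
      ring
    linarith
  constructor
  · rw [hlog]
    have h1 : 1 / (v * w) * (v * w / (A * (A + v + w) + v * w))
        = 1 / (A * (A + v + w) + v * w) := by
      field_simp
    have h2 : 1 / (A + v + w) ^ 2 ≤ 1 / (A * (A + v + w) + v * w) := by
      apply one_div_le_one_div_of_le hPvw
      nlinarith
    have h3 : 1 / (v * w) * (v * w / (A * (A + v + w) + v * w))
        ≤ 1 / (v * w) * (Real.log (A * (A + v + w) + v * w) - Real.log (A * (A + v + w))) :=
      mul_le_mul_of_nonneg_left hlo (by positivity)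
    linarith
  · rw [hlog]
    have h1 : 1 / (v * w) * (v * w / (A * (A + v + w))) = 1 / (A * (A + v + w)) := by
      field_simp
    have h2 : 1 / (A * (A + v + w)) ≤ 1 / A ^ 2 := by
      apply one_div_le_one_div_of_le (by positivity)
      nlinarith
    have h3 : 1 / (v * w) * (Real.log (A * (A + v + w) + v * w) - Real.log (A * (A + v + w)))
        ≤ 1 / (v * w) * (v * w / (A * (A + v + w))) :=
      mul_le_mul_of_nonneg_left hup (by positivity)
    linarith

/-- For `α, v, w > 0`, the limit defining the constant term `γ₀(2, α; v, w)` of the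
Barnes double zeta-function at `s = 2` exists. -/
theorem barnes_gamma0_at_two_limit_exists
    (α v w : ℝ) (hα : 0 < α) (hv : 0 < v) (hw : 0 < w) :
    ∃ L : ℝ, Tendsto (fun M : ℕ =>
      (∑ m ∈ Finset.range (M + 1), ∑ n ∈ Finset.range (M + 1),
          1 / (α + (m : ℝ) * v + (n : ℝ) * w) ^ 2)
        - (1 / (v * w)) * Real.log
            ((α + v * M) * (α + w * M) / (α * (α + v * M + w * M))))
      atTop (𝓝 L) := by
  classical
  -- basic objects
  set f : ℕ → ℕ → ℝ := fun m n => 1 / (α + (m : ℝ) * v + (n : ℝ) * w) ^ 2 with hf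
  set G : ℕ → ℕ → ℝ := fun m n => -(1 / (v * w)) * Real.log (α + (m : ℝ) * v + (n : ℝ) * w)
    with hG
  set D : ℕ → ℕ → ℝ := fun m n => G (m + 1) (n + 1) - G (m + 1) n - G m (n + 1) + G m n with hD
  have hApos : ∀ m n : ℕ, (0 : ℝ) < α + (m : ℝ) * v + (n : ℝ) * w := by
    intro m n; positivity
  have hfpos : ∀ m n : ℕ, 0 < f m n := by
    intro m n; simp only [hf]; positivity
  -- D expressed via cell_bounds
  have hDval : ∀ m n : ℕ, D m n = 1 / (v * w) *
      (Real.log ((α + (m : ℝ) * v + (n : ℝ) * w) + v)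
        + Real.log ((α + (m : ℝ) * v + (n : ℝ) * w) + w)
        - Real.log (α + (m : ℝ) * v + (n : ℝ) * w)
        - Real.log ((α + (m : ℝ) * v + (n : ℝ) * w) + v + w)) := by
    intro m n
    simp only [hD, hG]
    push_cast
    rw [show α + ((m : ℝ) + 1) * v + ((n : ℝ) + 1) * w
        = (α + (m : ℝ) * v + (n : ℝ) * w) + v + w from by ring,
      show α + ((m : ℝ) + 1) * v + (n : ℝ) * w = (α + (m : ℝ) * v + (n : ℝ) * w) + v from by ring,
      show α + (m : ℝ) * v + ((n : ℝ) + 1) * w = (α + (m : ℝ) * v + (n : ℝ) * w) + w from by ring]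
    ring
  have hDle : ∀ m n : ℕ, D m n ≤ f m n := by
    intro m n
    rw [hDval m n]
    exact (cell_bounds v w _ hv hw (hApos m n)).2
  have hDge : ∀ m n : ℕ, f (m + 1) (n + 1) ≤ D m n := by
    intro m n
    rw [hDval m n]
    have h := (cell_bounds v w _ hv hw (hApos m n)).1
    have : f (m + 1) (n + 1) = 1 / ((α + (m : ℝ) * v + (n : ℝ) * w) + v + w) ^ 2 := by
      simp only [hf]; push_cast; ring_nf
    rw [this]
    exact h
  -- telescoping identity
  have tele : ∀ M : ℕ, ∑ m ∈ Finset.range M, ∑ n ∈ Finset.range M, D m n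
      = (G M M - G M 0) - (G 0 M - G 0 0) := by
    intro M
    have inner : ∀ x : ℕ, ∑ n ∈ Finset.range M, (G x (n + 1) - G x n) = G x M - G x 0 :=
      fun x => Finset.sum_range_sub (G x) M
    have step : ∀ m : ℕ, ∑ n ∈ Finset.range M, D m n
        = (fun m => G m M - G m 0) (m + 1) - (fun m => G m M - G m 0) m := by
      intro m
      calc ∑ n ∈ Finset.range M, D m n
          = ∑ n ∈ Finset.range M,
            ((G (m + 1) (n + 1) - G (m + 1) n) - (G m (n + 1) - G m n)) :=
            Finset.sum_congr rfl (fun n _ => by simp only [hD]; ring)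
        _ = (∑ n ∈ Finset.range M, (G (m + 1) (n + 1) - G (m + 1) n))
            - ∑ n ∈ Finset.range M, (G m (n + 1) - G m n) := Finset.sum_sub_distrib _ _
        _ = _ := by rw [inner, inner]
    calc ∑ m ∈ Finset.range M, ∑ n ∈ Finset.range M, D m n
        = ∑ m ∈ Finset.range M,
          ((fun m => G m M - G m 0) (m + 1) - (fun m => G m M - G m 0) m) :=
          Finset.sum_congr rfl (fun m _ => step m)
      _ = (G M M - G M 0) - (G 0 M - G 0 0) := Finset.sum_range_sub (fun m => G m M - G m 0) M
  -- log term identity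
  have logid : ∀ M : ℕ, (1 / (v * w)) * Real.log
        ((α + v * M) * (α + w * M) / (α * (α + v * M + w * M)))
      = ∑ m ∈ Finset.range M, ∑ n ∈ Finset.range M, D m n := by
    intro M
    rw [tele M]
    have p1 : (0 : ℝ) < α + v * M := by positivity
    have p2 : (0 : ℝ) < α + w * M := by positivity
    have p3 : (0 : ℝ) < α + v * M + w * M := by positivity
    rw [Real.log_div (by positivity) (by positivity), Real.log_mul p1.ne' p2.ne',
      Real.log_mul hα.ne' p3.ne']
    simp only [hG]
    push_cast
    ring_nf
  -- definitions of the pieces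
  set S : ℕ → ℝ := fun M => ∑ m ∈ Finset.range M, ∑ n ∈ Finset.range M, f m n with hS
  set c : ℕ → ℝ := fun M => ∑ m ∈ Finset.range M, ∑ n ∈ Finset.range M, (f m n - D m n) with hc
  set E : ℕ → ℝ := fun M => (∑ m ∈ Finset.range M, f m M) + (∑ n ∈ Finset.range M, f M n)
    + f M M with hE
  -- boundary expansion
  have boundary : ∀ M : ℕ, S (M + 1) = S M + E M := by
    intro M
    simp only [hS, hE]
    have h1 : ∑ m ∈ Finset.range (M + 1), ∑ n ∈ Finset.range (M + 1), f m n
        = ∑ m ∈ Finset.range (M + 1), ((∑ n ∈ Finset.range M, f m n) + f m M) :=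
      Finset.sum_congr rfl (fun m _ => Finset.sum_range_succ _ _)
    rw [h1, Finset.sum_add_distrib, Finset.sum_range_succ, Finset.sum_range_succ]
    ring
  have csplit : ∀ M : ℕ, c M = S M - ∑ m ∈ Finset.range M, ∑ n ∈ Finset.range M, D m n := by
    intro M
    simp only [hc, hS]
    rw [← Finset.sum_sub_distrib]
    exact Finset.sum_congr rfl (fun m _ => Finset.sum_sub_distrib _ _)
  -- monotonicity of c
  have hcnn : ∀ m n : ℕ, 0 ≤ f m n - D m n := fun m n => by linarith [hDle m n]
  have hmono : Monotone c := by
    intro M N h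
    simp only [hc]
    rw [← Finset.sum_product', ← Finset.sum_product']
    apply Finset.sum_le_sum_of_subset_of_nonneg
    · exact Finset.product_subset_product (Finset.range_subset_range.2 h) (Finset.range_subset_range.2 h)
    · intro p _ _
      exact hcnn p.1 p.2
  -- boundedness of c
  set B : ℝ := (1 / α ^ 2 + 1 / (α * w)) + (1 / (α + v) ^ 2 + 1 / ((α + v) * v)) with hB
  have hbdd : ∀ M : ℕ, c M ≤ B := by
    intro M
    have step1 : c M ≤ ∑ m ∈ Finset.range M, ∑ n ∈ Finset.range M,
        (f m n - f (m + 1) (n + 1)) := by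
      simp only [hc]
      apply Finset.sum_le_sum
      intro m _
      apply Finset.sum_le_sum
      intro n _
      linarith [hDge m n]
    have split : ∑ m ∈ Finset.range M, ∑ n ∈ Finset.range M, (f m n - f (m + 1) (n + 1))
        = (∑ m ∈ Finset.range M, ∑ n ∈ Finset.range M, (f m n - f (m + 1) n))
          + ∑ m ∈ Finset.range M, ∑ n ∈ Finset.range M, (f (m + 1) n - f (m + 1) (n + 1)) := by
      rw [← Finset.sum_add_distrib]
      apply Finset.sum_congr rfl
      intro m _
      rw [← Finset.sum_add_distrib]
      apply Finset.sum_congr rfl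
      intro n _
      ring
    have T1 : ∑ m ∈ Finset.range M, ∑ n ∈ Finset.range M, (f m n - f (m + 1) n)
        ≤ 1 / α ^ 2 + 1 / (α * w) := by
      rw [Finset.sum_comm]
      have each : ∀ n ∈ Finset.range M, ∑ m ∈ Finset.range M, (f m n - f (m + 1) n)
          ≤ f 0 n := by
        intro n _
        have := Finset.sum_range_sub' (fun m => f m n) M
        rw [this]
        have := (hfpos M n).le
        linarith
      calc ∑ n ∈ Finset.range M, ∑ m ∈ Finset.range M, (f m n - f (m + 1) n)
          ≤ ∑ n ∈ Finset.range M, f 0 n := Finset.sum_le_sum each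
        _ = ∑ n ∈ Finset.range M, 1 / (α + (n : ℝ) * w) ^ 2 :=
            Finset.sum_congr rfl (fun n _ => by simp only [hf]; norm_num)
        _ ≤ 1 / α ^ 2 + 1 / (α * w) := oneD_bound α w hα hw M
    have T2 : ∑ m ∈ Finset.range M, ∑ n ∈ Finset.range M, (f (m + 1) n - f (m + 1) (n + 1))
        ≤ 1 / (α + v) ^ 2 + 1 / ((α + v) * v) := by
      have each : ∀ m ∈ Finset.range M, ∑ n ∈ Finset.range M, (f (m + 1) n - f (m + 1) (n + 1))
          ≤ f (m + 1) 0 := by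
        intro m _
        have := Finset.sum_range_sub' (fun n => f (m + 1) n) M
        rw [this]
        have := (hfpos (m + 1) M).le
        linarith
      calc ∑ m ∈ Finset.range M, ∑ n ∈ Finset.range M, (f (m + 1) n - f (m + 1) (n + 1))
          ≤ ∑ m ∈ Finset.range M, f (m + 1) 0 := Finset.sum_le_sum each
        _ = ∑ m ∈ Finset.range M, 1 / ((α + v) + (m : ℝ) * v) ^ 2 :=
            Finset.sum_congr rfl (fun m _ => by simp only [hf]; push_cast; ring_nf)
        _ ≤ 1 / (α + v) ^ 2 + 1 / ((α + v) * v) := oneD_bound (α + v) v (by linarith) hv M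
    calc c M ≤ _ := step1
      _ = _ := split
      _ ≤ B := by rw [hB]; linarith
  have hbdd' : BddAbove (Set.range c) := by
    refine ⟨B, ?_⟩
    rintro x ⟨M, rfl⟩
    exact hbdd M
  -- c converges
  have hC : Tendsto c atTop (𝓝 (⨆ M, c M)) := tendsto_atTop_ciSup hmono hbdd'
  -- E tends to zero
  have hEnn : ∀ M : ℕ, 0 ≤ E M := by
    intro M
    simp only [hE]
    have h1 : 0 ≤ ∑ m ∈ Finset.range M, f m M :=
      Finset.sum_nonneg (fun m _ => (hfpos m M).le)
    have h2 : 0 ≤ ∑ n ∈ Finset.range M, f M n :=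
      Finset.sum_nonneg (fun n _ => (hfpos M n).le)
    have h3 := (hfpos M M).le
    linarith
  have hEle : ∀ M : ℕ, 1 ≤ M → E M ≤ (1 / w ^ 2 + 1 / v ^ 2 + 1 / w ^ 2) * (1 / M) := by
    intro M hM
    have hM0 : (0 : ℝ) < M := by exact_mod_cast hM
    have bw : ∀ m : ℕ, f m M ≤ 1 / ((M : ℝ) * w) ^ 2 := by
      intro m
      simp only [hf]
      apply one_div_le_one_div_of_le (by positivity)
      have ha : (0 : ℝ) < α + (m : ℝ) * v := by positivity
      have hb : (0 : ℝ) < (M : ℝ) * w := by positivity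
      nlinarith [mul_pos ha hb, sq_nonneg (α + (m : ℝ) * v)]
    have bv : ∀ n : ℕ, f M n ≤ 1 / ((M : ℝ) * v) ^ 2 := by
      intro n
      simp only [hf]
      apply one_div_le_one_div_of_le (by positivity)
      have ha : (0 : ℝ) < α + (n : ℝ) * w := by positivity
      have hb : (0 : ℝ) < (M : ℝ) * v := by positivity
      nlinarith [mul_pos ha hb, sq_nonneg (α + (n : ℝ) * w)]
    have s1 : ∑ m ∈ Finset.range M, f m M ≤ M * (1 / ((M : ℝ) * w) ^ 2) := by
      calc ∑ m ∈ Finset.range M, f m M ≤ ∑ _m ∈ Finset.range M, 1 / ((M : ℝ) * w) ^ 2 :=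
            Finset.sum_le_sum (fun m _ => bw m)
        _ = M * (1 / ((M : ℝ) * w) ^ 2) := by
            rw [Finset.sum_const, Finset.card_range, nsmul_eq_mul]
    have s2 : ∑ n ∈ Finset.range M, f M n ≤ M * (1 / ((M : ℝ) * v) ^ 2) := by
      calc ∑ n ∈ Finset.range M, f M n ≤ ∑ _n ∈ Finset.range M, 1 / ((M : ℝ) * v) ^ 2 :=
            Finset.sum_le_sum (fun n _ => bv n)
        _ = M * (1 / ((M : ℝ) * v) ^ 2) := by
            rw [Finset.sum_const, Finset.card_range, nsmul_eq_mul]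
    have e1 : (M : ℝ) * (1 / ((M : ℝ) * w) ^ 2) = (1 / w ^ 2) * (1 / M) := by
      field_simp
    have e2 : (M : ℝ) * (1 / ((M : ℝ) * v) ^ 2) = (1 / v ^ 2) * (1 / M) := by
      field_simp
    have e3 : f M M ≤ (1 / w ^ 2) * (1 / M) := by
      have h1 : f M M ≤ 1 / ((M : ℝ) * w) ^ 2 := bw M
      have h2 : 1 / ((M : ℝ) * w) ^ 2 ≤ (1 / w ^ 2) * (1 / M) := by
        rw [show (1 / w ^ 2) * (1 / (M : ℝ)) = 1 / ((M : ℝ) * w ^ 2) from by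
          rw [one_div_mul_one_div]; ring_nf]
        apply one_div_le_one_div_of_le (by positivity)
        have h3 : (1 : ℝ) ≤ (M : ℝ) := by exact_mod_cast hM
        nlinarith [hw.le]
      linarith
    simp only [hE]
    rw [show (1 / w ^ 2 + 1 / v ^ 2 + 1 / w ^ 2) * (1 / (M : ℝ))
        = (1 / w ^ 2) * (1 / M) + (1 / v ^ 2) * (1 / M) + (1 / w ^ 2) * (1 / M) from by ring]
    linarith [s1, s2, e1, e2, e3]
  have hE0 : Tendsto E atTop (𝓝 0) := by
    have hconst : Tendsto (fun M : ℕ => (1 / w ^ 2 + 1 / v ^ 2 + 1 / w ^ 2) * (1 / (M : ℝ)))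
        atTop (𝓝 0) := by
      rw [show (0 : ℝ) = (1 / w ^ 2 + 1 / v ^ 2 + 1 / w ^ 2) * 0 from (mul_zero _).symm]
      exact tendsto_one_div_atTop_nhds_zero_nat.const_mul _
    apply tendsto_of_tendsto_of_tendsto_of_le_of_le' tendsto_const_nhds hconst
    · exact Eventually.of_forall hEnn
    · exact eventually_atTop.2 ⟨1, hEle⟩
  -- conclusion
  refine ⟨⨆ M, c M, ?_⟩
  have hsum : Tendsto (fun M => c M + E M) atTop (𝓝 ((⨆ M, c M) + 0)) := hC.add hE0
  rw [add_zero] at hsum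
  apply hsum.congr
  intro M
  have h1 := logid M
  have h2 := boundary M
  have h3 := csplit M
  have hSdef : S (M + 1) = ∑ m ∈ Finset.range (M + 1), ∑ n ∈ Finset.range (M + 1),
      1 / (α + (m : ℝ) * v + (n : ℝ) * w) ^ 2 := rfl
  rw [← hSdef, h1]
  linarith
end

section
/- For a real number a with 0 < a ≤ 1 and natural number k ≥ 1, the limit lim_{M→∞} ( ∑_{m=0}^{M} log^k(m+a)/(m+a) − log^{k+1}(M+a)/(k+1) ) exists (is a finite real number). -/
open Filter Topology

/-- For `0 < a ≤ 1` and `k ≥ 1`, the limit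
`lim_{M→∞} (∑_{m=0}^M log^k(m+a)/(m+a) − log^{k+1}(M+a)/(k+1))` exists. -/
theorem hurwitz_gammak_limit_exists
    (a : ℝ) (ha : 0 < a) (ha1 : a ≤ 1) (k : ℕ) (hk : 1 ≤ k) :
    ∃ L : ℝ, Tendsto (fun M : ℕ =>
        (∑ m ∈ Finset.range (M + 1),
          (Real.log ((m : ℝ) + a)) ^ k / ((m : ℝ) + a))
        - (Real.log ((M : ℝ) + a)) ^ (k + 1) / (k + 1))
      atTop (𝓝 L) := by
  classical
  let f : ℝ → ℝ := fun x => (Real.log (x + a)) ^ k / (x + a)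
  let F : ℝ → ℝ := fun x => (Real.log (x + a)) ^ (k + 1) / (k + 1)
  let S : ℕ → ℝ := fun M => (∑ m ∈ Finset.range (M + 1), f m) - F M
  -- derivative of log (x + a)
  have hlog : ∀ x : ℝ, 0 < x + a →
      HasDerivAt (fun y => Real.log (y + a)) (1 / (x + a)) x := by
    intro x hx
    have h := ((hasDerivAt_id x).add_const a).log hx.ne'
    simpa using h
  -- F' = f
  have hF' : ∀ x : ℝ, 0 < x + a → HasDerivAt F (f x) x := by
    intro x hx
    have h := ((hlog x hx).pow (k + 1)).div_const (k + 1)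
    convert h using 1
    · rfl
    · rfl
    · rfl
    have hk1 : ((k : ℝ) + 1) ≠ 0 := by positivity
    simp only [f, Nat.add_sub_cancel, Nat.cast_add, Nat.cast_one]
    field_simp
  -- derivative of f
  have hfd : ∀ x : ℝ, 0 < x + a → HasDerivAt f
      (((k : ℝ) * (Real.log (x + a)) ^ (k - 1) * (1 / (x + a)) * (x + a)
        - (Real.log (x + a)) ^ k * 1) / (x + a) ^ 2) x := by
    intro x hx
    exact ((hlog x hx).pow k).div ((hasDerivAt_id x).add_const a) hx.ne'
  -- threshold
  set c : ℝ := Real.exp k with hc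
  have hc0 : 0 < c := Real.exp_pos _
  -- f is antitone on [c, ∞)
  have hanti : AntitoneOn f (Set.Ici c) := by
    apply antitoneOn_of_deriv_nonpos (convex_Ici c)
    · intro x hx
      have hxa : 0 < x + a := by
        have : c ≤ x := hx
        nlinarith
      exact (hfd x hxa).continuousAt.continuousWithinAt
    · intro x hx
      rw [interior_Ici] at hx
      have hxa : 0 < x + a := by
        have : c < x := hx
        nlinarith
      exact ((hfd x hxa).differentiableAt.differentiableWithinAt)
    · intro x hx
      rw [interior_Ici] at hx
      have hxa : 0 < x + a := by
        have : c < x := hx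
        nlinarith
      rw [(hfd x hxa).deriv]
      have hL : (k : ℝ) ≤ Real.log (x + a) := by
        rw [Real.le_log_iff_exp_le hxa]
        have : c < x := hx
        nlinarith
      have hL0 : 0 ≤ Real.log (x + a) := le_trans (by positivity) hL
      have hnum : (k : ℝ) * (Real.log (x + a)) ^ (k - 1) * (1 / (x + a)) * (x + a)
          - (Real.log (x + a)) ^ k * 1 ≤ 0 := by
        have h1 : (1 / (x + a)) * (x + a) = 1 := by field_simp
        have hkk : (Real.log (x + a)) ^ k = (Real.log (x + a)) ^ (k - 1) * Real.log (x + a) := by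
          nth_rewrite 1 [show k = (k - 1) + 1 from by omega]
          rw [pow_succ]
        have hp : (0 : ℝ) ≤ (Real.log (x + a)) ^ (k - 1) := by positivity
        have h2 : (k : ℝ) * (Real.log (x + a)) ^ (k - 1) * (1 / (x + a)) * (x + a)
            = (k : ℝ) * (Real.log (x + a)) ^ (k - 1) := by
          field_simp
        calc (k : ℝ) * (Real.log (x + a)) ^ (k - 1) * (1 / (x + a)) * (x + a)
              - (Real.log (x + a)) ^ k * 1
            = (Real.log (x + a)) ^ (k - 1) * ((k : ℝ) - Real.log (x + a)) := by
              rw [h2, hkk]; ring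
          _ ≤ 0 := mul_nonpos_of_nonneg_of_nonpos hp (by linarith)
      exact div_nonpos_of_nonpos_of_nonneg hnum (by positivity)
  -- choose natural threshold
  set N₀ : ℕ := ⌈c⌉₊ + 1 with hN₀
  have hN₀c : c < (N₀ : ℝ) := by
    have h := Nat.le_ceil c
    have h2 : ((N₀ : ℕ) : ℝ) = (⌈c⌉₊ : ℝ) + 1 := by rw [hN₀]; push_cast; ring
    rw [h2]; linarith
  have hN₀pos : ∀ x : ℝ, (N₀ : ℝ) ≤ x → 0 < x + a := by
    intro x hx; nlinarith
  -- nonnegativity of f on [N₀, ∞)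
  have hfnn : ∀ x : ℝ, (N₀ : ℝ) ≤ x → 0 ≤ f x := by
    intro x hx
    have hxa : 0 < x + a := hN₀pos x hx
    have h1 : (1 : ℝ) ≤ x + a := by
      have : (1 : ℝ) ≤ (N₀ : ℝ) := by exact_mod_cast Nat.one_le_iff_ne_zero.mpr (by omega)
      nlinarith
    have := Real.log_nonneg h1
    positivity
  -- FTC: F (M+1) - F M = ∫ f over [M, M+1], and integral bounds
  have hstep : ∀ M : ℕ, N₀ ≤ M →
      f (M + 1) ≤ F (M + 1) - F M ∧ F (M + 1) - F M ≤ f M := by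
    intro M hM
    have hMc : c ≤ (M : ℝ) := by
      have : (N₀ : ℝ) ≤ (M : ℝ) := by exact_mod_cast hM
      linarith
    have hsub : Set.uIcc (M : ℝ) ((M : ℝ) + 1) ⊆ Set.Ici c := by
      rw [Set.uIcc_of_le (by linarith)]
      intro x hx
      exact le_trans hMc hx.1
    have hpos : ∀ x ∈ Set.uIcc (M : ℝ) ((M : ℝ) + 1), 0 < x + a := by
      intro x hx
      have := hsub hx
      have : c ≤ x := this
      nlinarith
    have hcont : ContinuousOn f (Set.uIcc (M : ℝ) ((M : ℝ) + 1)) := fun x hx =>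
      (hfd x (hpos x hx)).continuousAt.continuousWithinAt
    have hint : IntervalIntegrable f MeasureTheory.volume (M : ℝ) ((M : ℝ) + 1) :=
      hcont.intervalIntegrable
    have hFTC : ∫ x in (M : ℝ)..((M : ℝ) + 1), f x = F ((M : ℝ) + 1) - F (M : ℝ) :=
      intervalIntegral.integral_eq_sub_of_hasDerivAt
        (fun x hx => hF' x (hpos x hx)) hint
    have hIcc : Set.Icc (M : ℝ) ((M : ℝ) + 1) ⊆ Set.Ici c := by
      rw [← Set.uIcc_of_le (by linarith : (M : ℝ) ≤ (M : ℝ) + 1)]; exact hsub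
    constructor
    · have hlow : ∫ x in (M : ℝ)..((M : ℝ) + 1), f ((M : ℝ) + 1)
          ≤ ∫ x in (M : ℝ)..((M : ℝ) + 1), f x := by
        apply intervalIntegral.integral_mono_on (by linarith) (by simp) hint
        intro x hx
        exact hanti (hIcc hx) (hIcc ⟨by linarith, le_refl _⟩) hx.2
      rw [hFTC] at hlow
      simpa using hlow
    · have hhigh : ∫ x in (M : ℝ)..((M : ℝ) + 1), f x
          ≤ ∫ x in (M : ℝ)..((M : ℝ) + 1), f (M : ℝ) := by
        apply intervalIntegral.integral_mono_on (by linarith) hint (by simp)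
        intro x hx
        exact hanti (hIcc ⟨le_refl _, by linarith⟩) (hIcc hx) hx.1
      rw [hFTC] at hhigh
      simpa using hhigh
  -- step inequalities for S
  have hSdiff : ∀ M : ℕ, S (M + 1) - S M = f ((M : ℝ) + 1) - (F ((M : ℝ) + 1) - F (M : ℝ)) := by
    intro M
    simp only [S, Finset.sum_range_succ]
    push_cast
    ring
  -- the shifted sequence
  set T : ℕ → ℝ := fun n => S (n + N₀) with hT
  set g : ℕ → ℝ := fun n => f ((n + N₀ : ℕ) : ℝ) with hg
  have hTanti : Antitone T := by
    apply antitone_nat_of_succ_le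
    intro n
    have h1 := hSdiff (n + N₀)
    have h2 := (hstep (n + N₀) (by omega)).1
    show S (n + 1 + N₀) ≤ S (n + N₀)
    rw [show n + 1 + N₀ = n + N₀ + 1 from by omega]
    linarith
  have hTstep : ∀ n : ℕ, T n - T (n + 1) ≤ g n - g (n + 1) := by
    intro n
    have h1 := hSdiff (n + N₀)
    have h2 := (hstep (n + N₀) (by omega)).2
    show S (n + N₀) - S (n + 1 + N₀) ≤ f ((n + N₀ : ℕ) : ℝ) - f ((n + 1 + N₀ : ℕ) : ℝ)
    rw [show n + 1 + N₀ = n + N₀ + 1 from by omega]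
    have hcast : ((n + N₀ + 1 : ℕ) : ℝ) = ((n + N₀ : ℕ) : ℝ) + 1 := by push_cast; ring
    rw [hcast]
    linarith
  have hTbdd : ∀ n : ℕ, T 0 - g 0 ≤ T n := by
    intro n
    have htel : ∑ i ∈ Finset.range n, (T i - T (i + 1)) = T 0 - T n :=
      Finset.sum_range_sub' T n
    have htel2 : ∑ i ∈ Finset.range n, (g i - g (i + 1)) = g 0 - g n :=
      Finset.sum_range_sub' g n
    have hle : ∑ i ∈ Finset.range n, (T i - T (i + 1))
        ≤ ∑ i ∈ Finset.range n, (g i - g (i + 1)) :=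
      Finset.sum_le_sum fun i _ => hTstep i
    rw [htel, htel2] at hle
    have hfn : 0 ≤ g n := hfnn _ (by exact_mod_cast Nat.le_add_left N₀ n)
    linarith
  have hbdd : BddBelow (Set.range T) := by
    refine ⟨T 0 - g 0, ?_⟩
    rintro x ⟨n, rfl⟩
    exact hTbdd n
  have hTconv : Tendsto T atTop (𝓝 (⨅ n, T n)) := tendsto_atTop_ciInf hTanti hbdd
  refine ⟨⨅ n, T n, ?_⟩
  exact (tendsto_add_atTop_iff_nat N₀).mp hTconv
end

section
/- For α, v, w > 0, real s > 2, natural k, and y ≥ 0: ∫₀^∞ log^k(α+vx+wy)/(α+vx+wy)^s dx = ∑_{l=0}^{k} (k!/(k−l)!)·(1/(v(s−1)^{l+1}))·log^{k−l}(α+wy)/(α+wy)^{s−1}. -/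
open MeasureTheory Finset

namespace BarnesSkAux

open Real Filter

set_option maxHeartbeats 1000000 in
theorem lemA (β v p : ℝ) (hβ : 0 < β) (hv : 0 < v) (hp : p < -1) :
    IntegrableOn (fun x => (β + v * x) ^ p) (Set.Ioi (0:ℝ)) := by
  have hp1 : p + 1 < 0 := by linarith
  have hpos : ∀ x : ℝ, x ∈ Set.Ici (0:ℝ) → 0 < β + v * x := fun x hx =>
    add_pos_of_pos_of_nonneg hβ (mul_nonneg hv.le hx)
  have hderiv : ∀ x ∈ Set.Ici (0:ℝ),
      HasDerivAt (fun x => (β + v * x) ^ (p + 1) / (v * (p + 1))) ((β + v * x) ^ p) x := by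
    intro x hx
    have hu : HasDerivAt (fun x => β + v * x) v x := by
      simpa using ((hasDerivAt_id x).const_mul v).const_add β
    have h1 : HasDerivAt (fun x => (β + v * x) ^ (p + 1)) (v * (p + 1) * (β + v * x) ^ p) x := by
      have := hu.rpow_const (p := p + 1) (Or.inl (hpos x hx).ne')
      simpa [add_sub_cancel_right] using this
    have := h1.div_const (v * (p + 1))
    have hne : v * (p + 1) ≠ 0 := mul_ne_zero hv.ne' (by linarith)
    simpa [mul_div_assoc, mul_div_cancel_left₀ _ hne] using this
  refine integrableOn_Ioi_deriv_of_nonneg' (l := 0) hderiv (fun x hx => ?_) ?_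
  · exact (rpow_pos_of_pos (hpos x (Set.mem_Ici.mpr (le_of_lt hx))) p).le
  · have h1 : Tendsto (fun x : ℝ => β + v * x) atTop atTop :=
      tendsto_atTop_add_const_left _ _ (tendsto_id.const_mul_atTop hv)
    have h2 : Tendsto (fun t : ℝ => t ^ (p + 1)) atTop (nhds 0) := by
      have := tendsto_rpow_neg_atTop (y := -(p + 1)) (by linarith)
      rwa [neg_neg] at this
    have h3 : Tendsto (fun x : ℝ => (β + v * x) ^ (p + 1) / (v * (p + 1))) atTop
        (nhds (0 / (v * (p + 1)))) := (h2.comp h1).div_const _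
    rw [zero_div] at h3
    exact h3

theorem lemB1 (β v s c : ℝ) (m : ℕ) (x : ℝ) (ht : 0 < β + v * x) :
    HasDerivAt (fun x => c * Real.log (β + v * x) ^ m / (β + v * x) ^ (s - 1))
      (c * v * ((m : ℝ) * Real.log (β + v * x) ^ (m - 1)
        - (s - 1) * Real.log (β + v * x) ^ m) / (β + v * x) ^ s) x := by
  set t := β + v * x with htdef
  have hu : HasDerivAt (fun x => β + v * x) v x := by
    simpa using ((hasDerivAt_id x).const_mul v).const_add β
  have hlog : HasDerivAt (fun x => Real.log (β + v * x)) (t⁻¹ * v) x :=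
    by have := (Real.hasDerivAt_log ht.ne').comp x hu; exact this
  have hpow : HasDerivAt (fun x => Real.log (β + v * x) ^ m)
      ((m : ℝ) * Real.log t ^ (m - 1) * (t⁻¹ * v)) x := hlog.pow m
  have hden : HasDerivAt (fun x => (β + v * x) ^ (s - 1)) (v * (s - 1) * t ^ (s - 1 - 1)) x :=
    hu.rpow_const (Or.inl ht.ne')
  have hdne : t ^ (s - 1) ≠ 0 := (rpow_pos_of_pos ht _).ne'
  have hdiv := (hpow.const_mul c).div hden hdne
  refine hdiv.congr_deriv ?_
  have ht0 : t ≠ 0 := ht.ne'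
  have hA : t ^ s ≠ 0 := (rpow_pos_of_pos ht _).ne'
  have e1 : t ^ (s - 1) = t ^ s / t := by
    rw [rpow_sub ht, rpow_one]
  have e2 : t ^ (s - 1 - 1) = t ^ s / t / t := by
    rw [rpow_sub ht, rpow_sub ht, rpow_one]
  rw [e1, e2]
  field_simp
  ring

theorem lemB (β v s : ℝ) (hv : 0 < v) (hs : 2 < s) (k : ℕ) (x : ℝ) (ht : 0 < β + v * x) :
    HasDerivAt (fun x => -(1 / v) * ∑ l ∈ range (k + 1),
        (k.descFactorial l : ℝ) / (s - 1) ^ (l + 1)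
          * Real.log (β + v * x) ^ (k - l) / (β + v * x) ^ (s - 1))
      (Real.log (β + v * x) ^ k / (β + v * x) ^ s) x := by
  have hs1 : s - 1 ≠ 0 := by linarith
  have hts : (β + v * x) ^ s ≠ 0 := (rpow_pos_of_pos ht _).ne'
  set t := β + v * x with htdef
  set L := Real.log t with hL
  set G : ℕ → ℝ := fun l => (k.descFactorial l : ℝ) / (s - 1) ^ l * L ^ (k - l) / t ^ s with hG
  have hsum : HasDerivAt (fun x => ∑ l ∈ range (k + 1),
      (k.descFactorial l : ℝ) / (s - 1) ^ (l + 1)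
        * Real.log (β + v * x) ^ (k - l) / (β + v * x) ^ (s - 1))
      (∑ l ∈ range (k + 1),
        (k.descFactorial l : ℝ) / (s - 1) ^ (l + 1) * v
          * (((k - l : ℕ) : ℝ) * L ^ (k - l - 1) - (s - 1) * L ^ (k - l)) / t ^ s) x :=
    HasDerivAt.fun_sum fun l _ => lemB1 β v s _ (k - l) x ht
  have key : ∀ l ∈ range (k + 1),
      -(1 / v) * ((k.descFactorial l : ℝ) / (s - 1) ^ (l + 1) * v
          * (((k - l : ℕ) : ℝ) * L ^ (k - l - 1) - (s - 1) * L ^ (k - l)) / t ^ s)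
        = G l - G (l + 1) := by
    intro l _
    have hd : (k.descFactorial (l + 1) : ℝ) = ((k - l : ℕ) : ℝ) * (k.descFactorial l : ℝ) := by
      exact_mod_cast congrArg (Nat.cast : ℕ → ℝ) (Nat.descFactorial_succ k l)
    simp only [hG]
    rw [show k - (l + 1) = k - l - 1 from (Nat.sub_sub k l 1).symm, hd]
    field_simp
    ring
  have hval : ∑ l ∈ range (k + 1),
      (-(1 / v) * ((k.descFactorial l : ℝ) / (s - 1) ^ (l + 1) * v
        * (((k - l : ℕ) : ℝ) * L ^ (k - l - 1) - (s - 1) * L ^ (k - l)) / t ^ s))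
      = L ^ k / t ^ s := by
    rw [Finset.sum_congr rfl key, Finset.sum_range_sub' G (k + 1)]
    have h0 : G 0 = L ^ k / t ^ s := by simp [hG]
    have h1 : G (k + 1) = 0 := by
      simp [hG, Nat.descFactorial_eq_zero_iff_lt.mpr (Nat.lt_succ_self k)]
    rw [h0, h1, sub_zero]
  have := hsum.const_mul (-(1 / v))
  refine this.congr_deriv ?_
  rw [Finset.mul_sum, hval]

theorem lemC (β v s : ℝ) (hv : 0 < v) (hs : 2 < s) (k : ℕ) :
    Tendsto (fun x => -(1 / v) * ∑ l ∈ range (k + 1),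
        (k.descFactorial l : ℝ) / (s - 1) ^ (l + 1)
          * Real.log (β + v * x) ^ (k - l) / (β + v * x) ^ (s - 1))
      atTop (nhds 0) := by
  have h1 : Tendsto (fun x : ℝ => β + v * x) atTop atTop :=
    tendsto_atTop_add_const_left _ _ (tendsto_id.const_mul_atTop hv)
  have hterm : ∀ l ∈ range (k + 1), Tendsto (fun x =>
      (k.descFactorial l : ℝ) / (s - 1) ^ (l + 1)
        * Real.log (β + v * x) ^ (k - l) / (β + v * x) ^ (s - 1)) atTop (nhds 0) := by
    intro l _
    have ho : (fun t : ℝ => Real.log t ^ (k - l)) =o[atTop] fun t : ℝ => t ^ (s - 1) := by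
      have := isLittleO_log_rpow_rpow_atTop ((k - l : ℕ) : ℝ) (show (0:ℝ) < s - 1 by linarith)
      simpa [Real.rpow_natCast] using this
    have h3 := ho.tendsto_div_nhds_zero.comp h1
    have h4 := h3.const_mul ((k.descFactorial l : ℝ) / (s - 1) ^ (l + 1))
    simpa [Function.comp_def, mul_div_assoc] using h4
  have := (tendsto_finset_sum (range (k + 1)) hterm).const_mul (-(1 / v))
  simpa using this

theorem lemD (β v s : ℝ) (hβ : 0 < β) (hv : 0 < v) (hs : 2 < s) (k : ℕ) :
    IntegrableOn (fun x => Real.log (β + v * x) ^ k / (β + v * x) ^ s) (Set.Ioi (0:ℝ)) := by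
  obtain ⟨T, hT⟩ : ∃ T : ℝ, ∀ t ≥ T, ‖Real.log t ^ k‖ ≤ 1 * ‖t‖ :=
    eventually_atTop.mp (Real.isLittleO_pow_log_id_atTop.def one_pos)
  obtain ⟨C, hC⟩ : ∃ C, ∀ t ∈ Set.Icc β (max β T), ‖Real.log t ^ k‖ ≤ C := by
    apply isCompact_Icc.exists_bound_of_continuousOn
    exact (Real.continuousOn_log.mono (fun t ht => by
      simp only [Set.mem_compl_iff, Set.mem_singleton_iff]
      exact (hβ.trans_le ht.1).ne')).pow k
  have hC0 : 0 ≤ C := le_trans (norm_nonneg _) (hC β ⟨le_rfl, le_max_left _ _⟩)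
  have hpos : ∀ x : ℝ, x ∈ Set.Ioi (0:ℝ) → 0 < β + v * x := fun x hx =>
    add_pos_of_pos_of_nonneg hβ (mul_nonneg hv.le (le_of_lt hx))
  have hbound : ∀ x ∈ Set.Ioi (0:ℝ),
      ‖Real.log (β + v * x) ^ k / (β + v * x) ^ s‖
        ≤ C * (β + v * x) ^ (-s) + (β + v * x) ^ (1 - s) := by
    intro x hx
    set t := β + v * x with htdef
    have ht : 0 < t := hpos x hx
    have hts : (0:ℝ) < t ^ s := rpow_pos_of_pos ht _
    have h1 : ‖Real.log t ^ k / t ^ s‖ = ‖Real.log t ^ k‖ / t ^ s := by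
      rw [norm_div, Real.norm_of_nonneg hts.le]
    rw [h1]
    have hx' : 0 < x := hx
    have hβt : β ≤ t := by nlinarith [mul_pos hv hx']
    rcases le_total t (max β T) with hcase | hcase
    · have hb := hC t ⟨hβt, hcase⟩
      calc ‖Real.log t ^ k‖ / t ^ s ≤ C / t ^ s := by gcongr
          _ = C * t ^ (-s) := by rw [rpow_neg ht.le]; ring
          _ ≤ C * t ^ (-s) + t ^ (1 - s) :=
            le_add_of_nonneg_right (rpow_pos_of_pos ht _).le
    · have hTt : T ≤ t := le_trans (le_max_right _ _) hcase
      have hb := hT t hTt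
      rw [one_mul, Real.norm_of_nonneg ht.le] at hb
      calc ‖Real.log t ^ k‖ / t ^ s ≤ t / t ^ s := by gcongr
          _ = t ^ (1 - s) := by
            rw [rpow_sub ht, rpow_one]
          _ ≤ C * t ^ (-s) + t ^ (1 - s) := by
            have := mul_nonneg hC0 (rpow_pos_of_pos ht (-s)).le
            linarith
  have hmaj : IntegrableOn (fun x => C * (β + v * x) ^ (-s) + (β + v * x) ^ (1 - s))
      (Set.Ioi (0:ℝ)) := by
    exact ((lemA β v (-s) hβ hv (by linarith)).const_mul C).add
      (lemA β v (1 - s) hβ hv (by linarith))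
  have hmeas : AEStronglyMeasurable (fun x => Real.log (β + v * x) ^ k / (β + v * x) ^ s)
      (volume.restrict (Set.Ioi (0:ℝ))) := by
    have hu : Continuous fun x : ℝ => β + v * x := by continuity
    apply ContinuousOn.aestronglyMeasurable ?_ measurableSet_Ioi
    apply ContinuousOn.div
    · exact (Real.continuousOn_log.comp hu.continuousOn
        (fun x hx => (hpos x hx).ne')).pow k
    · exact hu.continuousOn.rpow_const (fun x hx => Or.inl (hpos x hx).ne')
    · exact fun x hx => (rpow_pos_of_pos (hpos x hx) s).ne'
  exact Integrable.mono' hmaj hmeas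
    ((ae_restrict_mem measurableSet_Ioi).mono hbound)

end BarnesSkAux

/-- Closed form for `∫₀^∞ log^k(α+vx+wy)/(α+vx+wy)^s dx`, real `s > 2`, `k : ℕ`. -/
theorem barnes_Sk_closed_form
    (α v w : ℝ) (hα : 0 < α) (hv : 0 < v) (hw : 0 < w)
    (s : ℝ) (hs : 2 < s) (k : ℕ) (y : ℝ) (hy : 0 ≤ y) :
    (∫ x in Set.Ioi (0 : ℝ),
        (Real.log (α + v * x + w * y)) ^ k / (α + v * x + w * y) ^ s)
      = ∑ l ∈ Finset.range (k + 1),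
          ((k.factorial : ℝ) / ((k - l).factorial : ℝ))
            * (1 / (v * (s - 1) ^ (l + 1)))
            * (Real.log (α + w * y)) ^ (k - l) / (α + w * y) ^ (s - 1) := by
  set β := α + w * y with hβdef
  have hβ : 0 < β := add_pos_of_pos_of_nonneg hα (mul_nonneg hw.le hy)
  have hrw : ∀ x : ℝ, α + v * x + w * y = β + v * x := fun x => by rw [hβdef]; ring
  simp only [hrw]
  have hint := integral_Ioi_of_hasDerivAt_of_tendsto' (a := 0)
    (fun x hx => BarnesSkAux.lemB β v s hv hs k x
      (add_pos_of_pos_of_nonneg hβ (mul_nonneg hv.le hx)))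
    (BarnesSkAux.lemD β v s hβ hv hs k) (BarnesSkAux.lemC β v s hv hs k)
  rw [hint, zero_sub, mul_zero, add_zero, neg_mul, neg_neg, Finset.mul_sum]
  refine Finset.sum_congr rfl fun l hl => ?_
  have hl' : l ≤ k := Nat.lt_succ_iff.mp (Finset.mem_range.mp hl)
  have hdesc : ((k - l).factorial : ℝ) * (k.descFactorial l : ℝ) = (k.factorial : ℝ) := by
    exact_mod_cast congrArg (Nat.cast : ℕ → ℝ) (Nat.factorial_mul_descFactorial hl')
  have hfne : ((k - l).factorial : ℝ) ≠ 0 := Nat.cast_ne_zero.mpr (k - l).factorial_ne_zero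
  have hs1 : (s - 1) ≠ 0 := by linarith
  field_simp
  linear_combination (Real.log β ^ (k - l)) * hdesc
end
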